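/- Let K, L, M ≥ 1 and N = K + L + M, and consider N qubits forming three stars: the first with leaves 0,…,K−2 and center K−1, the second with leaves K,…,K+L−2 and center K+L−1, the third with leaves K+L,…,N−2 and center N−1. For each star of size m, write T_0 = |+⟩^{⊗(m−1)}⊗|0⟩ and T_1 = |−⟩^{⊗(m−1)}⊗|1⟩ (center last). Then the caterpillar graph state of central-path length 2, i.e. the result of applying all leaf-to-center controlled-Z gates together with CZ_{K−1,K+L−1} and CZ_{K+L−1,N−1} to |+⟩^{⊗N}, equals (1/(2√2)) · Σ_{s₁,s₂,s₃ ∈ {0,1}} (−1)^{s₁s₂ + s₂s₃} · T^{(1)}_{s₁} ⊗ T^{(2)}_{s₂} ⊗ T^{(3)}_{s₃}. -/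

import Mathlib

/-! Each CZ gate multiplies the amplitude of a basis string `x` by `(-1)^(x_j x_k)`, so the graph
state has amplitude `2^(-N/2) (-1)^(Σ_edges x_j x_k)`. On the right-hand side the center factor
`|sᵢ⟩` of each star forces `sᵢ` to be the center bit of `x`, so a single term of the triple sum
survives; in it the leaf factors `|±⟩` contribute exactly the signs of the leaf-to-center edges and
`(-1)^(s₁s₂ + s₂s₃)` those of the central path. -/

open Finset

/-- The single-qubit computational basis state `|0⟩`. -/
noncomputable def ket0 : Fin 2 → ℂ := fun t => if t = 0 then 1 else 0

/-- The single-qubit computational basis state `|1⟩`. -/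
noncomputable def ket1 : Fin 2 → ℂ := fun t => if t = 1 then 1 else 0

/-- The single-qubit state `|+⟩ = (|0⟩ + |1⟩)/√2`. -/
noncomputable def ketP : Fin 2 → ℂ := fun t => (ket0 t + ket1 t) / Real.sqrt 2

/-- The single-qubit state `|−⟩ = (|0⟩ − |1⟩)/√2`. -/
noncomputable def ketM : Fin 2 → ℂ := fun t => (ket0 t - ket1 t) / Real.sqrt 2

/-- The controlled-Z gate acting on qubits `j` and `k` of an `n`-qubit state:
`(CZ_{j,k} ψ)(x) = (−1)^{x_j · x_k} · ψ(x)`. -/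
def CZ {n : ℕ} (j k : Fin n) (ψ : (Fin n → Fin 2) → ℂ) : (Fin n → Fin 2) → ℂ :=
  fun x => (-1 : ℂ) ^ ((x j : ℕ) * (x k : ℕ)) * ψ x

/-- Apply a product of controlled-Z gates, one for each (ordered) pair in the list. -/
def applyCZs {n : ℕ} (es : List (Fin n × Fin n)) (ψ : (Fin n → Fin 2) → ℂ) :
    (Fin n → Fin 2) → ℂ :=
  es.foldr (fun e acc => CZ e.1 e.2 acc) ψ

/-- The product state of single-qubit states `φ_j`, i.e. `x ↦ ∏_j φ_j(x_j)`. -/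
noncomputable def prodState {n : ℕ} (φ : Fin n → Fin 2 → ℂ) : (Fin n → Fin 2) → ℂ :=
  fun x => ∏ j, φ j (x j)

/-- `ketPM 0 = |+⟩` and `ketPM 1 = |−⟩`. -/
noncomputable def ketPM : Fin 2 → Fin 2 → ℂ := fun s => if s = 0 then ketP else ketM

/-- `ketB 0 = |0⟩` and `ketB 1 = |1⟩`. -/
noncomputable def ketB : Fin 2 → Fin 2 → ℂ := fun s => if s = 0 then ket0 else ket1

lemma ketP_apply (t : Fin 2) : ketP t = ((Real.sqrt 2 : ℝ) : ℂ)⁻¹ := by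
  fin_cases t <;> simp [ketP, ket0, ket1, div_eq_mul_inv]

lemma ketPM_apply (s t : Fin 2) :
    ketPM s t = (-1 : ℂ) ^ ((s : ℕ) * (t : ℕ)) * ((Real.sqrt 2 : ℝ) : ℂ)⁻¹ := by
  fin_cases s <;> fin_cases t <;> simp [ketPM, ketP, ketM, ket0, ket1, div_eq_mul_inv]

lemma ketB_apply (s t : Fin 2) : ketB s t = if s = t then 1 else 0 := by
  fin_cases s <;> fin_cases t <;> simp [ketB, ket0, ket1]

lemma applyCZs_apply {n : ℕ} (es : List (Fin n × Fin n)) (ψ : (Fin n → Fin 2) → ℂ)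
    (x : Fin n → Fin 2) :
    applyCZs es ψ x = (-1 : ℂ) ^ (es.map fun e => (x e.1 : ℕ) * (x e.2 : ℕ)).sum * ψ x := by
  induction es with
  | nil => simp [applyCZs]
  | cons e es ih =>
    simp only [applyCZs, List.foldr_cons, CZ] at *
    rw [ih, List.map_cons, List.sum_cons, pow_add, mul_assoc]

lemma prodState_ketP_apply {n : ℕ} (x : Fin n → Fin 2) :
    prodState (fun _ => ketP) x = ((Real.sqrt 2 : ℝ) : ℂ)⁻¹ ^ n := by
  simp [prodState, ketP_apply]

lemma prod_ketPM_apply {m : ℕ} (s : Fin 2) (y : Fin m → Fin 2) :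
    ∏ j, ketPM s (y j) =
      (-1 : ℂ) ^ (∑ j, (y j : ℕ) * (s : ℕ)) * ((Real.sqrt 2 : ℝ) : ℂ)⁻¹ ^ m := by
  simp only [ketPM_apply, prod_mul_distrib, prod_pow_eq_pow_sum, prod_const, card_univ,
    Fintype.card_fin, mul_comm (s : ℕ)]

lemma two_mul_sqrt_two_inv : ((2 * Real.sqrt 2 : ℝ) : ℂ)⁻¹ = ((Real.sqrt 2 : ℝ) : ℂ)⁻¹ ^ 3 := by
  rw [inv_pow, ← Complex.ofReal_pow, pow_succ, Real.sq_sqrt zero_le_two, mul_comm]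

/-- The caterpillar graph state of central-path length 2 on `N = K + L + M` qubits
(`K, L, M ≥ 1`), made of three stars (leaves `0,…,K−2`, center `K−1`; leaves
`K,…,K+L−2`, center `K+L−1`; leaves `K+L,…,N−2`, center `N−1`) whose centers are
joined along a path.  Applying all leaf-to-center CZ gates together with
`CZ_{K−1,K+L−1}` and `CZ_{K+L−1,N−1}` to `|+⟩^{⊗N}` yields
`(1/(2√2)) Σ_{s₁,s₂,s₃} (−1)^{s₁s₂+s₂s₃} T⁽¹⁾_{s₁} ⊗ T⁽²⁾_{s₂} ⊗ T⁽³⁾_{s₃}`,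
where `T_0 = |+⟩^{⊗(m−1)}⊗|0⟩` and `T_1 = |−⟩^{⊗(m−1)}⊗|1⟩` for a star of size `m`. -/
theorem caterpillar_path2_state (K L M : ℕ) (hK : 1 ≤ K) (hL : 1 ≤ L) (hM : 1 ≤ M) :
    applyCZs
        (((List.finRange (K - 1)).map fun j : Fin (K - 1) =>
            ((⟨j, by have := j.isLt; omega⟩ : Fin (K + L + M)),
              (⟨K - 1, by omega⟩ : Fin (K + L + M)))) ++
          ((List.finRange (L - 1)).map fun j : Fin (L - 1) =>
            ((⟨K + j, by have := j.isLt; omega⟩ : Fin (K + L + M)),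
              (⟨K + L - 1, by omega⟩ : Fin (K + L + M)))) ++
          ((List.finRange (M - 1)).map fun j : Fin (M - 1) =>
            ((⟨K + L + j, by have := j.isLt; omega⟩ : Fin (K + L + M)),
              (⟨K + L + M - 1, by omega⟩ : Fin (K + L + M)))) ++
          [((⟨K - 1, by omega⟩ : Fin (K + L + M)), (⟨K + L - 1, by omega⟩ : Fin (K + L + M))),
            ((⟨K + L - 1, by omega⟩ : Fin (K + L + M)),
              (⟨K + L + M - 1, by omega⟩ : Fin (K + L + M)))])
        (prodState fun _ => ketP) =
      fun x : Fin (K + L + M) → Fin 2 =>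
        ((2 * Real.sqrt 2 : ℝ) : ℂ)⁻¹ *
          ∑ s₁ : Fin 2, ∑ s₂ : Fin 2, ∑ s₃ : Fin 2,
            (-1 : ℂ) ^ ((s₁ : ℕ) * (s₂ : ℕ) + (s₂ : ℕ) * (s₃ : ℕ)) *
              (((∏ j : Fin (K - 1), ketPM s₁ (x ⟨j, by have := j.isLt; omega⟩)) *
                  ketB s₁ (x ⟨K - 1, by omega⟩)) *
                ((∏ j : Fin (L - 1), ketPM s₂ (x ⟨K + j, by have := j.isLt; omega⟩)) *
                  ketB s₂ (x ⟨K + L - 1, by omega⟩)) *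
                ((∏ j : Fin (M - 1), ketPM s₃ (x ⟨K + L + j, by have := j.isLt; omega⟩)) *
                  ketB s₃ (x ⟨K + L + M - 1, by omega⟩))) := by
  funext x
  rw [applyCZs_apply, prodState_ketP_apply]
  simp only [ketB_apply, mul_ite, ite_mul, mul_one, mul_zero, zero_mul, sum_ite_eq', mem_univ,
    if_true, prod_ketPM_apply]
  simp only [List.map_append, List.sum_append, List.map_map, Function.comp_def, List.map_cons,
    List.map_nil, List.sum_cons, List.sum_nil, ← Fin.sum_univ_def]
  have hN : K + L + M = (K - 1) + (L - 1) + (M - 1) + 3 := by omega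
  rw [two_mul_sqrt_two_inv, congrArg (((Real.sqrt 2 : ℝ) : ℂ)⁻¹ ^ ·) hN]
  ring
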